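/- For all integers n ≥ 2 and 1 ≤ k ≤ n/2, one has n·Ψ(k/n) = 2·S(n,k); that is, the value of Ψ at the rational point k/n equals twice the sum of the remainders in the Euclidean algorithm for (n,k), divided by n. -/

import Mathlib

/-! At `x = b / (a + b)` with `b > 0` one has `1 / x = 1 + a / b`, so `{1 / x} = (a mod b) / b`,
`T(x) = (b + c) / (a + b)` and `I(x) = c / (b + c)` with `c = a mod b`: the map `I` performs one
step `(a, b) ↦ (b, a mod b)` of the Euclidean algorithm. The summands `t_j` of the series satisfy
`t_0(x) = T(x) I(x)` and `t_{j+1}(x) = T(x) t_j(I x)`, so by strong induction on `b` the series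
at `b / (a + b)` sums to `S(b, a mod b) / (a + b)`. Taking `a = n - k`, `b = k` and using
`S(n, k) = k + S(k, n mod k)` gives the theorem. -/

/-- `T(x) = x·(1 + {1/x})` for `x ≠ 0`, `T(0) = 0`. -/
noncomputable def Tmap (x : ℝ) : ℝ := if x = 0 then 0 else x * (1 + Int.fract (1 / x))

/-- `I(x) = {1/x} / (1 + {1/x})` for `x ≠ 0`, `I(0) = 0`. -/
noncomputable def Imap (x : ℝ) : ℝ :=
  if x = 0 then 0 else Int.fract (1 / x) / (1 + Int.fract (1 / x))

/-- `Ψ(x) = 2x + 2·Σ_{j ≥ 1} T(x)·T(I(x))·⋯·T(I^{j-1}(x))·I^{j}(x)`. -/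
noncomputable def Psi (x : ℝ) : ℝ :=
  2 * x + 2 * ∑' j : ℕ, (∏ i ∈ Finset.range (j + 1), Tmap (Imap^[i] x)) * Imap^[j + 1] x

/-- Sum of remainders in the Euclidean algorithm applied to `(n, k)`. -/
def euclidRemainderSum : ℕ → ℕ → ℕ
  | _, 0 => 0
  | n, (k+1) => (k+1) + euclidRemainderSum (k+1) (n % (k+1))
  termination_by n k => k
  decreasing_by exact Nat.mod_lt _ (Nat.succ_pos k)

lemma euclidRemainderSum_zero_right (n : ℕ) : euclidRemainderSum n 0 = 0 := by
  rw [euclidRemainderSum]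

lemma euclidRemainderSum_of_pos {n k : ℕ} (hk : 0 < k) :
    euclidRemainderSum n k = k + euclidRemainderSum k (n % k) := by
  obtain ⟨k, rfl⟩ := Nat.exists_eq_add_one_of_ne_zero hk.ne'
  rw [euclidRemainderSum]

lemma Imap_zero : Imap 0 = 0 := if_pos rfl

lemma fract_inv_div_add (a b : ℕ) :
    Int.fract (1 / ((b : ℝ) / (a + b))) = ((a % b : ℕ) : ℝ) / b := by
  rw [one_div_div, ← Nat.add_mod_right a b, ← Int.fract_div_natCast_eq_div_natCast_mod]
  push_cast
  rfl

lemma Tmap_div_add (a : ℕ) {b : ℕ} (hb : 0 < b) :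
    Tmap ((b : ℝ) / (a + b)) = ((b + a % b : ℕ) : ℝ) / (a + b) := by
  have hb' : (0 : ℝ) < b := by exact_mod_cast hb
  rw [Tmap, if_neg (by positivity), fract_inv_div_add a b]
  push_cast
  field_simp

lemma Imap_div_add (a : ℕ) {b : ℕ} (hb : 0 < b) :
    Imap ((b : ℝ) / (a + b)) = ((a % b : ℕ) : ℝ) / (b + (a % b : ℕ)) := by
  have hb' : (0 : ℝ) < b := by exact_mod_cast hb
  rw [Imap, if_neg (by positivity), fract_inv_div_add a b]
  field_simp

noncomputable def psiTerm (x : ℝ) (j : ℕ) : ℝ :=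
  (∏ i ∈ Finset.range (j + 1), Tmap (Imap^[i] x)) * Imap^[j + 1] x

lemma Psi_eq_tsum_psiTerm (x : ℝ) : Psi x = 2 * x + 2 * ∑' j, psiTerm x j := rfl

lemma psiTerm_zero (x : ℝ) : psiTerm x 0 = Tmap x * Imap x := by
  simp [psiTerm]

lemma psiTerm_succ (x : ℝ) (j : ℕ) : psiTerm x (j + 1) = Tmap x * psiTerm (Imap x) j := by
  simp only [psiTerm, Finset.prod_range_succ', Function.iterate_succ_apply,
    Function.iterate_zero_apply]
  ring

lemma psiTerm_of_Imap_eq_zero {x : ℝ} (hx : Imap x = 0) (j : ℕ) : psiTerm x j = 0 := by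
  rw [psiTerm, Function.iterate_succ_apply, hx, Function.iterate_fixed Imap_zero, mul_zero]

theorem hasSum_psiTerm_div_add (b : ℕ) (hb : 0 < b) (a : ℕ) :
    HasSum (psiTerm ((b : ℝ) / (a + b)))
      ((euclidRemainderSum b (a % b) : ℝ) / (a + b)) := by
  induction b using Nat.strong_induction_on generalizing a with
  | _ b ih =>
  have hT := Tmap_div_add a hb
  have hI := Imap_div_add a hb
  set x : ℝ := b / (a + b)
  set c := a % b
  rcases Nat.eq_zero_or_pos c with hc0 | hc
  · rw [hc0, Nat.cast_zero, zero_div] at hI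
    rw [funext (psiTerm_of_Imap_eq_zero hI), hc0, euclidRemainderSum_zero_right, Nat.cast_zero,
      zero_div]
    exact hasSum_zero
  set S := euclidRemainderSum c (b % c)
  have htail : HasSum (fun j => psiTerm x (j + 1)) ((S : ℝ) / (a + b)) := by
    have hscale : Tmap x * ((S : ℝ) / (b + c)) = S / (a + b) := by
      rw [hT]
      push_cast
      field_simp
    simp_rw [psiTerm_succ, hI, ← hscale]
    exact (ih c (Nat.mod_lt a hb) hc b).mul_left _
  have hhead : (euclidRemainderSum b c : ℝ) / (a + b) - ∑ j ∈ Finset.range 1, psiTerm x j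
      = S / (a + b) := by
    rw [Finset.sum_range_one, psiTerm_zero, hT, hI, euclidRemainderSum_of_pos hc]
    push_cast
    field_simp
    ring
  rw [← hhead] at htail
  exact (hasSum_nat_add_iff' 1).mp htail

theorem stmt_14 :
    ∀ n k : ℕ, 2 ≤ n → 1 ≤ k → 2 * k ≤ n →
      (n : ℝ) * Psi ((k : ℝ) / n) = 2 * (euclidRemainderSum n k : ℝ) := by
  intro n k _ hk hkn
  obtain ⟨a, rfl⟩ : ∃ a, n = a + k := ⟨n - k, by omega⟩
  push_cast
  rw [Psi_eq_tsum_psiTerm, (hasSum_psiTerm_div_add k hk a).tsum_eq, euclidRemainderSum_of_pos hk, Nat.add_mod_right]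
  push_cast
  field_simp
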